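/- arXiv:1508.03003 — 2 statements merged into one kernel-verified Lean document; each statement's English description precedes it below -/
import Mathlib

section
/- Suppose the divisor X = {(λ, m_λ)}_{λ∈Λ} has the property that for every C > 0 there is a compact set K ⊂ ℂ with ⋃_{λ∈Λ, m_λ>αC²} D(λ, sqrt(m_λ/α) − C) = ℂ \ K. Then there exists a subset Λ₁ ⊂ Λ such that (i) for every C > 0 there is a compact K with ⋃_{λ∈Λ₁, m_λ>αC²} D(λ, sqrt(m_λ/α) − C) = ℂ \ K, and (ii) m_λ → ∞ as |λ| → ∞ along λ ∈ Λ₁. -/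
open Complex MeasureTheory Metric

noncomputable section

/-- Squared Fock norm: (α/π) ∫ |f|² e^{-α|z|²}. -/
def fockNorm2 (α : ℝ) (f : ℂ → ℂ) : ℝ :=
  (α / Real.pi) * ∫ z : ℂ, ‖f z‖ ^ 2 * Real.exp (-α * ‖z‖ ^ 2)

/-- Membership in the Fock space F_α². -/
def memFock (α : ℝ) (f : ℂ → ℂ) : Prop :=
  Differentiable ℂ f ∧
  MeasureTheory.Integrable
    (fun z : ℂ => ‖f z‖ ^ 2 * Real.exp (-α * ‖z‖ ^ 2))

/-- Fock inner product. -/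
def fockInner (α : ℝ) (f g : ℂ → ℂ) : ℂ :=
  ((α / Real.pi : ℝ) : ℂ) *
    ∫ z : ℂ, f z * (starRingEnd ℂ) (g z) * (Real.exp (-α * ‖z‖ ^ 2) : ℝ)

/-- The normalized monomials e_k(z) = √(αᵏ/k!) zᵏ. -/
def fockE (α : ℝ) (k : ℕ) (z : ℂ) : ℂ :=
  (Real.sqrt (α ^ k / Nat.factorial k) : ℝ) * z ^ k

/-- The translation operator T_l. -/
def fockT (α : ℝ) (l : ℂ) (f : ℂ → ℂ) (ζ : ℂ) : ℂ :=
  Complex.exp ((α : ℂ) * (starRingEnd ℂ) l * ζ - ((α / 2 : ℝ) : ℂ) * (‖l‖ ^ 2 : ℝ)) *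
    f (ζ - l)

/-- Radius √(m_λ/α) associated to the point λ. -/
def discR (α : ℝ) (m : ℂ → ℕ) (l : ℂ) : ℝ := Real.sqrt ((m l : ℝ) / α)

/-- Finite overlap condition. -/
def FiniteOverlap (α : ℝ) (Λ : Set ℂ) (m : ℂ → ℕ) : Prop :=
  ∃ N : ℕ, ∀ z : ℂ,
    ({l | l ∈ Λ ∧ z ∈ Metric.ball l (discR α m l)}).Finite ∧
    ({l | l ∈ Λ ∧ z ∈ Metric.ball l (discR α m l)}).ncard ≤ N

/-- The sampling sum Σ_{λ∈Λ} Σ_{k<m_λ} |⟨f, T_λ e_k⟩|². -/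
def samplingSum (α : ℝ) (Λ : Set ℂ) (m : ℂ → ℕ) (f : ℂ → ℂ) : ℝ :=
  ∑' l : Λ, ∑ k ∈ Finset.range (m l), ‖fockInner α f (fockT α l (fockE α k))‖ ^ 2

/-- X = (Λ, m) is a sampling divisor for F_α². -/
def SamplingDiv (α : ℝ) (Λ : Set ℂ) (m : ℂ → ℕ) : Prop :=
  ∃ c C : ℝ, 0 < c ∧ c ≤ C ∧ ∀ f : ℂ → ℂ, memFock α f →
    (c * fockNorm2 α f ≤ samplingSum α Λ m f ∧ samplingSum α Λ m f ≤ C * fockNorm2 α f)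

/-- X = (Λ, m) is an interpolating divisor for F_α². -/
def InterpolatingDiv (α : ℝ) (Λ : Set ℂ) (m : ℂ → ℕ) : Prop :=
  ∀ v : ℂ → ℕ → ℂ,
    Summable (fun l : Λ => ∑ k ∈ Finset.range (m l), ‖v l k‖ ^ 2) →
    ∃ f : ℂ → ℂ, memFock α f ∧
      ∀ l ∈ Λ, ∀ k < m l, fockInner α f (fockT α l (fockE α k)) = v l k

/-- f vanishes at l to order at least n. -/
def VanishesTo (f : ℂ → ℂ) (l : ℂ) (n : ℕ) : Prop :=
  ∀ j < n, iteratedDeriv j f l = 0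

/-!
Since `α C² < m_λ` just says that the disc `D(λ, √(m_λ/α) - C)` is nonempty, the hypothesis says
that the discs of `Λ` shrunk by `C` cover a neighbourhood of infinity, for every `C > 0`. Assign
to each point `z` a depth `c z ∈ ℕ` such that `z` is covered by the discs shrunk by `c z` and
`c z → ∞` as `z → ∞`, and let `Λ₁` consist of the points `λ` whose disc, shrunk by `c z`, still
contains some point `z` of positive depth. Then `Λ₁` inherits the covering property, and if
`√(m_λ/α) ≤ M` for `λ ∈ Λ₁` then the witness `z` has depth `< M` and lies within `M` of `λ`, so
`λ` ranges over a bounded set.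
-/

open Bornology Filter

section ShrunkCover

variable {E : Type*} [PseudoMetricSpace E]

def shrunkCover (Λ : Set E) (r : E → ℝ) (C : ℝ) : Set E :=
  ⋃ l ∈ Λ, ball l (r l - C)

theorem isOpen_shrunkCover (Λ : Set E) (r : E → ℝ) (C : ℝ) : IsOpen (shrunkCover Λ r C) :=
  isOpen_biUnion fun _ _ => isOpen_ball

theorem exists_tendsto_cobounded_forall_pos_mem {U : ℕ → Set E}
    (hU : ∀ n, IsBounded (U (n + 1))ᶜ) :
    ∃ c : E → ℕ, Tendsto c (cobounded E) atTop ∧ ∀ z, 0 < c z → z ∈ U (c z) := by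
  rcases isEmpty_or_nonempty E with hE | ⟨⟨x₀⟩⟩
  · exact ⟨0, by simp, fun z => isEmptyElim z⟩
  choose ρ hρ using fun n => (hU n).subset_closedBall x₀
  -- enlarging the radii to `n` makes the balls exhaust `E`
  set R : ℕ → ℝ := fun n => max (ρ n) n
  have hR : ∀ z, ∃ n, dist z x₀ ≤ R n := fun z =>
    (exists_nat_ge (dist z x₀)).imp fun n hn => hn.trans (le_max_right _ _)
  refine ⟨fun z => Nat.find (hR z), tendsto_atTop.2 fun n => ?_, fun z hz => ?_⟩
  · refine isBounded_compl_iff.1 <| ((isBounded_biUnion (Set.finite_lt_nat n)).2 fun j _ =>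
      isBounded_closedBall (x := x₀) (r := R j)).subset fun z hz => ?_
    exact Set.mem_biUnion (not_le.1 <| Set.notMem_ofPred_iff.1 hz)
      (mem_closedBall.2 (Nat.find_spec (hR z)))
  · obtain ⟨k, hk⟩ := Nat.exists_eq_succ_of_ne_zero hz.ne'
    rw [hk]
    by_contra hzU
    refine Nat.find_min (hR z) (hk ▸ k.lt_succ_self) ?_
    exact (mem_closedBall.1 (hρ k hzU)).trans (le_max_left _ _)

theorem exists_subset_isBounded_compl_shrunkCover_and_isBounded_setOf_le
    {Λ : Set E} {r : E → ℝ} (hcover : ∀ C, 0 < C → IsBounded (shrunkCover Λ r C)ᶜ) :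
    ∃ Λ₁ ⊆ Λ, (∀ C, 0 < C → IsBounded (shrunkCover Λ₁ r C)ᶜ) ∧
      ∀ M, IsBounded {l ∈ Λ₁ | r l ≤ M} := by
  obtain ⟨c, hc, hcU⟩ := exists_tendsto_cobounded_forall_pos_mem
    (U := fun n => shrunkCover Λ r n) fun n => hcover _ (Nat.cast_pos.2 n.succ_pos)
  refine ⟨{l ∈ Λ | ∃ z, 0 < c z ∧ z ∈ ball l (r l - c z)}, fun l hl => hl.1,
    fun C hC => ?_, fun M => ?_⟩
  · rw [isBounded_compl_iff, isCobounded_def]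
    filter_upwards [hc.eventually_ge_atTop ⌈C⌉₊] with z hz
    have hpos : 0 < c z := (Nat.ceil_pos.2 hC).trans_le hz
    obtain ⟨l, hl, hzl⟩ := Set.mem_iUnion₂.1 (hcU z hpos)
    exact Set.mem_iUnion₂.2 ⟨l, ⟨hl, z, hpos, hzl⟩,
      ball_subset_ball (by linarith [Nat.ceil_le.1 hz]) hzl⟩
  · have hshallow : IsBounded {z | (c z : ℝ) < M} :=
      (isBounded_compl_iff.2 (hc.eventually_ge_atTop ⌈M⌉₊)).subset fun z hz hz' =>
        (Nat.ceil_le.1 hz').not_gt hz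
    refine (hshallow.thickening (δ := M)).subset fun l ⟨⟨_, z, hpos, hzl⟩, hrM⟩ => ?_
    have hzl' := mem_ball.1 hzl
    have hpos' : (0 : ℝ) < c z := Nat.cast_pos.2 hpos
    exact mem_thickening_iff.2 ⟨z, show (c z : ℝ) < M by linarith [dist_nonneg (x := z) (y := l)],
      by rw [dist_comm]; linarith⟩

theorem exists_isCompact_eq_compl_iff_isBounded_compl [ProperSpace E] {U : Set E}
    (hU : IsOpen U) : (∃ K, IsCompact K ∧ U = Kᶜ) ↔ IsBounded Uᶜ :=
  ⟨fun ⟨K, hK, hUK⟩ => hUK ▸ (compl_compl K).symm ▸ hK.isBounded,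
    fun h => ⟨Uᶜ, isCompact_of_isClosed_isBounded hU.isClosed_compl h, (compl_compl U).symm⟩⟩

end ShrunkCover

theorem setOf_lt_and_mem_ball_eq_shrunkCover {α C : ℝ} (hα : 0 < α) (hC : 0 < C)
    (Λ : Set ℂ) (m : ℂ → ℕ) :
    {z : ℂ | ∃ l ∈ Λ, α * C ^ 2 < (m l : ℝ) ∧ z ∈ ball l (discR α m l - C)} =
      shrunkCover Λ (discR α m) C := by
  ext z
  simp only [shrunkCover, Set.mem_ofPred_eq, Set.mem_iUnion₂, exists_prop]
  refine exists_congr fun l => and_congr_right fun _ => and_iff_right_of_imp fun hz => ?_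
  have hCr : C < discR α m l := by linarith [dist_nonneg (x := z) (y := l), mem_ball.1 hz]
  rw [discR, Real.lt_sqrt hC.le, lt_div_iff₀ hα] at hCr
  linarith

theorem sublambda_with_multiplicities_to_infty_general (α : ℝ) (hα : 0 < α)
    (Λ : Set ℂ) (m : ℂ → ℕ)
    (hcover : ∀ C : ℝ, 0 < C → ∃ K : Set ℂ, IsCompact K ∧
      {z : ℂ | ∃ l ∈ Λ, α * C ^ 2 < (m l : ℝ) ∧ z ∈ Metric.ball l (discR α m l - C)} = Kᶜ) :
    ∃ Λ₁ ⊆ Λ,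
      (∀ C : ℝ, 0 < C → ∃ K : Set ℂ, IsCompact K ∧
        {z : ℂ | ∃ l ∈ Λ₁, α * C ^ 2 < (m l : ℝ) ∧ z ∈ Metric.ball l (discR α m l - C)} = Kᶜ) ∧
      (∀ M : ℕ, ∃ R : ℝ, ∀ l ∈ Λ₁, R < ‖l‖ → M < m l) := by
  have hcover' : ∀ C, 0 < C → IsBounded (shrunkCover Λ (discR α m) C)ᶜ := fun C hC => by
    rw [← exists_isCompact_eq_compl_iff_isBounded_compl (isOpen_shrunkCover _ _ _),
      ← setOf_lt_and_mem_ball_eq_shrunkCover hα hC]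
    exact hcover C hC
  obtain ⟨Λ₁, hΛ₁, hcover₁, hbdd⟩ :=
    exists_subset_isBounded_compl_shrunkCover_and_isBounded_setOf_le hcover'
  refine ⟨Λ₁, hΛ₁, fun C hC => ?_, fun M => ?_⟩
  · rw [setOf_lt_and_mem_ball_eq_shrunkCover hα hC,
      exists_isCompact_eq_compl_iff_isBounded_compl (isOpen_shrunkCover _ _ _)]
    exact hcover₁ C hC
  · obtain ⟨R, hR⟩ := (hbdd √((M : ℝ) / α)).subset_closedBall 0
    refine ⟨R, fun l hl hlR => ?_⟩
    have hM : √((M : ℝ) / α) < discR α m l :=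
      not_le.1 fun h => (mem_closedBall_zero_iff.1 (hR ⟨hl, h⟩)).not_gt hlR
    rw [discR, Real.sqrt_lt_sqrt_iff (by positivity), div_lt_div_iff_of_pos_right hα] at hM
    exact_mod_cast hM

theorem sublambda_with_multiplicities_to_infty (α : ℝ) (hα : 0 < α)
    (Λ : Set ℂ) (m : ℂ → ℕ) (hm : ∀ l ∈ Λ, 1 ≤ m l)
    (hfo : FiniteOverlap α Λ m)
    (hcover : ∀ C : ℝ, 0 < C → ∃ K : Set ℂ, IsCompact K ∧
      {z : ℂ | ∃ l ∈ Λ, α * C ^ 2 < (m l : ℝ) ∧ z ∈ Metric.ball l (discR α m l - C)} = Kᶜ) :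
    ∃ Λ₁ ⊆ Λ,
      (∀ C : ℝ, 0 < C → ∃ K : Set ℂ, IsCompact K ∧
        {z : ℂ | ∃ l ∈ Λ₁, α * C ^ 2 < (m l : ℝ) ∧ z ∈ Metric.ball l (discR α m l - C)} = Kᶜ) ∧
      (∀ M : ℕ, ∃ R : ℝ, ∀ l ∈ Λ₁, R < ‖l‖ → M < m l) :=
  sublambda_with_multiplicities_to_infty_general α hα Λ m hcover
end
end

section
/- If the discs D(λ, sqrt(m_λ/α) + C), λ ∈ Λ, are pairwise disjoint for some C > 0, and m_λ → ∞ as |λ| → ∞, then for every R > 0 the set of λ ∈ Λ with sqrt(m_λ/α) ≥ |λ| − R is finite. Consequently the union ⋃_{λ∈Λ} D(λ, sqrt(m_λ/α)) cannot equal ℂ \ K for any compact K. -/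
open Complex MeasureTheory Metric

noncomputable section

/-! Write `r_λ = √(m_λ/α)`. When `r_λ ≥ |λ| - R`, the disc `D(λ, r_λ + C)` contains a disc of
radius `C` centred in the closed disc of radius `R`; disjoint discs of a fixed radius with centres
in a bounded set are finitely many. For the second claim, a point of `∂D(λ, r_λ)` at distance
`|λ| + r_λ` from the origin lies in no disc `D(μ, r_μ)`, thanks to the margin `C`. If the union
were `ℂ \ K`, a point outside `K` would lie in some `D(λ, r_λ)`, and such a boundary point, even
farther out, would be a point outside `K` that the union misses. -/

theorem Set.Finite.of_pairwiseDisjoint_of_ball_subset {X ι : Type*} [PseudoMetricSpace X]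
    {s : Set ι} {U : ι → Set X} {A : Set X} {ε : ℝ} (hε : 0 < ε)
    (hU : s.PairwiseDisjoint U) (hA : TotallyBounded A)
    (hball : ∀ i ∈ s, ∃ x ∈ A, ball x ε ⊆ U i) : s.Finite := by
  obtain ⟨t, ht, hAt⟩ := Metric.totallyBounded_iff.1 hA (ε / 2) (half_pos hε)
  have hsub : ∀ y ∈ t, {i ∈ s | ∃ x ∈ ball y (ε / 2), ball x ε ⊆ U i}.Subsingleton := by
    rintro y - i ⟨hi, x, hxy, hxU⟩ j ⟨hj, x', hx'y, hx'U⟩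
    by_contra hij
    have hxx' : x' ∈ ball x ε := by
      rw [mem_ball] at hxy hx'y ⊢
      linarith [dist_triangle_right x' x y]
    exact (hU hi hj hij).ne_of_mem (hxU hxx') (hx'U (mem_ball_self hε)) rfl
  refine (ht.biUnion fun y hy => (hsub y hy).finite).subset fun i hi => ?_
  obtain ⟨x, hxA, hxU⟩ := hball i hi
  obtain ⟨y, hyt, hxy⟩ := Set.mem_iUnion₂.1 (hAt hxA)
  exact Set.mem_biUnion hyt ⟨hi, x, hxy, hxU⟩

theorem notMem_biUnion_ball_of_dist_eq {X : Type*} [PseudoMetricSpace X] {s : Set X}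
    {r : X → ℝ} {C : ℝ} (hC : 0 < C)
    (hdisj : s.PairwiseDisjoint fun x => ball x (r x + C)) {x z : X} (hx : x ∈ s)
    (hz : dist z x = r x) : z ∉ ⋃ y ∈ s, ball y (r y) := by
  simp only [Set.mem_iUnion, mem_ball, not_exists]
  intro y hy hzy
  rcases eq_or_ne y x with rfl | hyx
  · exact hz.not_lt hzy
  · exact (hdisj hy hx hyx).ne_of_mem (mem_ball.2 (by linarith)) (mem_ball.2 (by linarith)) rfl

section NormedSpace

variable {E : Type*} [NormedAddCommGroup E] [NormedSpace ℝ E]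

theorem finite_setOf_norm_sub_le_of_pairwiseDisjoint_ball [ProperSpace E] {s : Set E}
    {r : E → ℝ} {C R : ℝ} (hr : ∀ x ∈ s, 0 ≤ r x) (hC : 0 < C) (hR : 0 ≤ R)
    (hdisj : s.PairwiseDisjoint fun x => ball x (r x + C)) :
    {x ∈ s | ‖x‖ - R ≤ r x}.Finite := by
  refine Set.Finite.of_pairwiseDisjoint_of_ball_subset hC (hdisj.subset fun x hx => hx.1)
    (isCompact_closedBall (0 : E) R).totallyBounded fun x ⟨hxs, hx⟩ => ?_
  obtain ⟨p, hxp, hp0⟩ := exists_dist_le_le (x := x) (z := (0 : E)) (hr x hxs) hR (by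
    rw [dist_zero_right]; linarith)
  refine ⟨p, mem_closedBall.2 hp0, fun y hy => ?_⟩
  rw [mem_ball] at hy ⊢
  linarith [dist_triangle_right y x p]

theorem exists_dist_eq_and_norm_eq_add [Nontrivial E] (x : E) {r : ℝ} (hr : 0 ≤ r) :
    ∃ z, dist z x = r ∧ ‖z‖ = ‖x‖ + r := by
  obtain ⟨u, hu, hxu⟩ : ∃ u : E, ‖u‖ = 1 ∧ ‖x‖ • u = x := by
    rcases eq_or_ne x 0 with rfl | hx
    · obtain ⟨u, hu⟩ := exists_norm_eq E zero_le_one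
      exact ⟨u, hu, by simp⟩
    · exact ⟨‖x‖⁻¹ • x, by simp [norm_smul, hx], by simp [smul_smul, hx]⟩
  refine ⟨(‖x‖ + r) • u, ?_, ?_⟩
  · nth_rewrite 2 [← hxu]
    rw [dist_eq_norm, ← sub_smul, add_sub_cancel_left, norm_smul, hu, mul_one,
      Real.norm_of_nonneg hr]
  · rw [norm_smul, hu, mul_one, Real.norm_of_nonneg (by positivity)]

theorem biUnion_ball_ne_compl_of_pairwiseDisjoint [Nontrivial E] {s : Set E} {r : E → ℝ}
    {C : ℝ} (hr : ∀ x ∈ s, 0 ≤ r x) (hC : 0 < C)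
    (hdisj : s.PairwiseDisjoint fun x => ball x (r x + C)) {K : Set E}
    (hK : Bornology.IsBounded K) :
    ⋃ x ∈ s, ball x (r x) ≠ Kᶜ := by
  intro hcover
  obtain ⟨R, hR, hKR⟩ := hK.subset_closedBall_lt 0 0
  obtain ⟨z₀, hz₀⟩ := exists_norm_eq E (by linarith : 0 ≤ R + 1)
  have hz₀K : z₀ ∈ Kᶜ := fun h => by
    linarith [mem_closedBall_zero_iff.1 (hKR h)]
  rw [← hcover] at hz₀K
  obtain ⟨x, hxs, hz₀x⟩ := Set.mem_iUnion₂.1 hz₀K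
  obtain ⟨z, hzx, hz⟩ := exists_dist_eq_and_norm_eq_add x (hr x hxs)
  have hzK : z ∈ K := by
    simpa [hcover] using notMem_biUnion_ball_of_dist_eq hC hdisj hxs hzx
  have hz₀z : ‖z₀‖ < ‖z‖ := by
    rw [hz]
    linarith [norm_le_norm_add_norm_sub' z₀ x, mem_ball_iff_norm.1 hz₀x]
  linarith [mem_closedBall_zero_iff.1 (hKR hzK)]

end NormedSpace

theorem disjoint_and_mult_to_infty_incompatible_with_cover_general (α : ℝ)
    (Λ : Set ℂ) (m : ℂ → ℕ)
    (C : ℝ) (hC : 0 < C)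
    (hdisj : ∀ l₁ ∈ Λ, ∀ l₂ ∈ Λ, l₁ ≠ l₂ →
      Disjoint (Metric.ball l₁ (discR α m l₁ + C)) (Metric.ball l₂ (discR α m l₂ + C))) :
    (∀ R : ℝ, 0 < R → ({l | l ∈ Λ ∧ ‖l‖ - R ≤ discR α m l}).Finite) ∧
    (∀ K : Set ℂ, IsCompact K → (⋃ l ∈ Λ, Metric.ball l (discR α m l)) ≠ Kᶜ) := by
  have hr : ∀ l ∈ Λ, 0 ≤ discR α m l := fun _ _ => Real.sqrt_nonneg _
  have hΛ : Λ.PairwiseDisjoint fun l => ball l (discR α m l + C) := hdisj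
  exact ⟨fun R hR => finite_setOf_norm_sub_le_of_pairwiseDisjoint_ball hr hC hR.le hΛ,
    fun K hK => biUnion_ball_ne_compl_of_pairwiseDisjoint hr hC hΛ hK.isBounded⟩

theorem disjoint_and_mult_to_infty_incompatible_with_cover (α : ℝ) (hα : 0 < α)
    (Λ : Set ℂ) (m : ℂ → ℕ) (hm : ∀ l ∈ Λ, 1 ≤ m l)
    (C : ℝ) (hC : 0 < C)
    (hdisj : ∀ l₁ ∈ Λ, ∀ l₂ ∈ Λ, l₁ ≠ l₂ →
      Disjoint (Metric.ball l₁ (discR α m l₁ + C)) (Metric.ball l₂ (discR α m l₂ + C)))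
    (hmult : ∀ M : ℕ, ∃ R : ℝ, ∀ l ∈ Λ, R < ‖l‖ → M < m l) :
    (∀ R : ℝ, 0 < R → ({l | l ∈ Λ ∧ ‖l‖ - R ≤ discR α m l}).Finite) ∧
    (∀ K : Set ℂ, IsCompact K → (⋃ l ∈ Λ, Metric.ball l (discR α m l)) ≠ Kᶜ) :=
  disjoint_and_mult_to_infty_incompatible_with_cover_general α Λ m C hC hdisj
end
end
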